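/- arXiv:1911.10341 — 5 statements merged into one kernel-verified Lean document; each statement's English description precedes it below -/
import Mathlib

section
/- For a cell c with neighbours N and ignition times ι(n) for n ∈ N, the ignition time of c equals the minimum t ∈ ℕ such that x(c,0) ≤ Σ_{n ∈ N} max(0, min(t - ι(n), y(n,0))), where the subtraction t - ι(n) is taken in ℤ; moreover, removing from N any neighbour n with ι(n) ≥ ι(c) does not change this minimum. -/
/-- The ignition time of a cell `c` is the least `t` such that
`x(c,0) ≤ Σ_{n ∈ N} max(0, min(t - ι(n), y(n,0)))`, and removing from `N` any
neighbour `n` with `ι(n) ≥ ι(c)` (i.e. keeping only those with `ι(n) < ι(c)`)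
does not change this minimum. -/
theorem ignition_time_remove_late_neighbours {α : Type*} (N : Finset α)
    (ι y : α → ℕ) (X : ℕ) (hX : 0 < X) (T : ℕ)
    (hT : (X : ℤ) ≤ ∑ n ∈ N, max 0 (min ((T : ℤ) - ι n) (y n)))
    (hleast : ∀ s : ℕ, s < T →
      ¬ ((X : ℤ) ≤ ∑ n ∈ N, max 0 (min ((s : ℤ) - ι n) (y n)))) :
    ((X : ℤ) ≤ ∑ n ∈ N.filter (fun n => ι n < T), max 0 (min ((T : ℤ) - ι n) (y n))) ∧
    (∀ s : ℕ, s < T →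
      ¬ ((X : ℤ) ≤ ∑ n ∈ N.filter (fun n => ι n < T), max 0 (min ((s : ℤ) - ι n) (y n)))) := by
  constructor
  · calc (X : ℤ) ≤ ∑ n ∈ N, max 0 (min ((T : ℤ) - ι n) (y n)) := hT
      _ = ∑ n ∈ N.filter (fun n => ι n < T), max 0 (min ((T : ℤ) - ι n) (y n)) := by
          refine (Finset.sum_filter_of_ne ?_).symm
          intro n _ hne
          by_contra h
          push_neg at h
          apply hne
          have : (T : ℤ) - ι n ≤ 0 := by
            have : (T : ℤ) ≤ ι n := by exact_mod_cast h
            linarith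
          simp [max_eq_left, min_le_of_left_le this, le_trans (min_le_left _ _) this]
  · intro s hs hle
    apply hleast s hs
    refine le_trans hle (Finset.sum_le_sum_of_subset_of_nonneg (Finset.filter_subset _ _) ?_)
    intro n _ _
    exact le_max_left _ _
end

section
/- In the vertex-cover reduction instance for the fire model, a burning edge-cell (with values (1,1)) can never ignite an adjacent vertex-cell (with values (n,1)) when n ≥ 2 and each vertex-cell has at most 3 adjacent edge-cells whose burn durations are 1. -/
/-- In the vertex-cover reduction instance, a vertex-cell of resistance
`X = n ≥ 2` adjacent to at most 4 edge-cells (each burning for exactly one time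
step, hence contributing at most 1) never ignites from edge-cells alone when
`n` exceeds the number of its burning neighbours. -/
theorem vertex_cell_never_ignites_from_edge_cells {α : Type*} (N : Finset α)
    (ι : α → ℕ) (X : ℕ) (hX : 2 ≤ X) (hcard : N.card ≤ 4) (hlt : N.card < X) :
    ∀ t : ℤ, (∑ n ∈ N, max 0 (min (t - ι n) (1 : ℤ))) < (X : ℤ) := by
  intro t
  have h1 : (∑ n ∈ N, max 0 (min (t - ι n) (1 : ℤ))) ≤ ∑ _n ∈ N, (1 : ℤ) := by
    apply Finset.sum_le_sum
    intro i _
    simp [max_le_iff, min_le_right]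
  have h2 : (∑ _n ∈ N, (1 : ℤ)) = N.card := by simp
  have h3 : (N.card : ℤ) < X := by exact_mod_cast hlt
  omega
end

section
/- If S ⊆ F is a set of vertex-cells corresponding to a vertex cover C of G in the reduction instance, then setting all cells of S on fire at time 0 eventually ignites every edge-cell adjacent to any vertex-cell (i.e., every cell of T). -/
def gridNbrs (p : ℤ × ℤ) : Finset (ℤ × ℤ) :=
  {(p.1 + 1, p.2), (p.1 - 1, p.2), (p.1, p.2 + 1), (p.1, p.2 - 1)}

def fireStep (st : ℤ × ℤ → ℕ × ℕ) : ℤ × ℤ → ℕ × ℕ := fun c =>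
  if (st c).2 = 0 then st c
  else if (st c).1 = 0 then ((st c).1, (st c).2 - 1)
  else ((st c).1 - ((gridNbrs c).filter (fun q => (st q).1 = 0 ∧ 0 < (st q).2)).card,
        (st c).2)

def fireEvolve (st0 : ℤ × ℤ → ℕ × ℕ) : ℕ → ℤ × ℤ → ℕ × ℕ
  | 0 => st0
  | t + 1 => fireStep (fireEvolve st0 t)

def EventuallyIgnites (x0 y0 : ℤ × ℤ → ℕ) (S : Finset (ℤ × ℤ)) (c : ℤ × ℤ) : Prop :=
  ∃ t, ((fireEvolve (fun p => (if p ∈ S then 0 else x0 p, y0 p)) t) c).1 = 0 ∧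
       0 < ((fireEvolve (fun p => (if p ∈ S then 0 else x0 p, y0 p)) t) c).2

structure GridEmbedding {V : Type*} (G : SimpleGraph V) where
  pos : V → ℤ × ℤ
  inj : Function.Injective pos
  epath : ∀ ⦃u v : V⦄, G.Adj u v → List (ℤ × ℤ)
  head_eq : ∀ {u v : V} (h : G.Adj u v), (epath h).head? = some (pos u)
  last_eq : ∀ {u v : V} (h : G.Adj u v), (epath h).getLast? = some (pos v)
  steps : ∀ {u v : V} (h : G.Adj u v),
    List.Chain' (fun p q => (p.1 - q.1).natAbs + (p.2 - q.2).natAbs = 1) (epath h)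
  interior_disj : ∀ {u v u' v' : V} (h : G.Adj u v) (h' : G.Adj u' v'),
    s(u, v) ≠ s(u', v') → ∀ p ∈ (epath h).tail.dropLast, p ∉ epath h'
  interior_not_pos : ∀ {u v : V} (h : G.Adj u v),
    ∀ p ∈ (epath h).tail.dropLast, ∀ w : V, p ≠ pos w

section A
variable (st0 : ℤ × ℤ → ℕ × ℕ)

lemma fire_x_zero_succ (t : ℕ) (p : ℤ × ℤ) (h : (fireEvolve st0 t p).1 = 0) :
    (fireEvolve st0 (t+1) p).1 = 0 := by
  show (fireStep (fireEvolve st0 t) p).1 = 0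
  unfold fireStep
  split_ifs <;> simp [h]

lemma fire_x_le (t : ℕ) (p : ℤ × ℤ) : (fireEvolve st0 t p).1 ≤ (st0 p).1 := by
  induction t with
  | zero => exact le_rfl
  | succ t ih =>
    refine le_trans ?_ ih
    show (fireStep (fireEvolve st0 t) p).1 ≤ _
    unfold fireStep
    split_ifs <;> simp

lemma fire_y_stable (t : ℕ) (p : ℤ × ℤ) (h : (fireEvolve st0 t p).1 ≠ 0) :
    (fireEvolve st0 t p).2 = (st0 p).2 := by
  induction t with
  | zero => rfl
  | succ t ih =>
    have hx : (fireEvolve st0 t p).1 ≠ 0 := fun h0 => h (fire_x_zero_succ st0 t p h0)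
    have hy := ih hx
    show (fireStep (fireEvolve st0 t) p).2 = _
    unfold fireStep
    split_ifs with h1
    · exact hy
    · exact hy

lemma fire_ignite_of_zero (p : ℤ × ℤ) (hy : (st0 p).2 ≠ 0) :
    ∀ t, (fireEvolve st0 t p).1 = 0 →
      ∃ s, (fireEvolve st0 s p).1 = 0 ∧ 0 < (fireEvolve st0 s p).2 := by
  intro t
  induction t with
  | zero => intro h0; exact ⟨0, h0, Nat.pos_of_ne_zero hy⟩
  | succ t ih =>
    intro h0
    by_cases hx : (fireEvolve st0 t p).1 = 0
    · exact ih hx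
    · refine ⟨t+1, h0, ?_⟩
      have hy' : (fireEvolve st0 t p).2 = (st0 p).2 := fire_y_stable st0 t p hx
      show 0 < (fireStep (fireEvolve st0 t) p).2
      unfold fireStep
      split_ifs with h1
      · omega
      · simp only
        omega

lemma fire_spread (p q : ℤ × ℤ) (hq : q ∈ gridNbrs p)
    (hx : (st0 p).1 ≤ 1) (hy : (st0 p).2 ≠ 0)
    (hburn : ∃ t, (fireEvolve st0 t q).1 = 0 ∧ 0 < (fireEvolve st0 t q).2) :
    ∃ s, (fireEvolve st0 s p).1 = 0 ∧ 0 < (fireEvolve st0 s p).2 := by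
  obtain ⟨t, hq0, hqy⟩ := hburn
  by_cases hxp : (fireEvolve st0 t p).1 = 0
  · exact fire_ignite_of_zero st0 p hy t hxp
  · apply fire_ignite_of_zero st0 p hy (t+1)
    have hyp : (fireEvolve st0 t p).2 = (st0 p).2 := fire_y_stable st0 t p hxp
    have hle := fire_x_le st0 t p
    have hcard : 1 ≤ ((gridNbrs p).filter
        (fun r => (fireEvolve st0 t r).1 = 0 ∧ 0 < (fireEvolve st0 t r).2)).card := by
      refine Finset.card_pos.mpr ⟨q, ?_⟩
      simp only [Finset.mem_filter]
      exact ⟨hq, hq0, hqy⟩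
    show (fireStep (fireEvolve st0 t) p).1 = 0
    unfold fireStep
    split_ifs with h1
    · omega
    · simp only
      omega

lemma adj_mem_gridNbrs {p q : ℤ × ℤ}
    (h : (p.1 - q.1).natAbs + (p.2 - q.2).natAbs = 1) : p ∈ gridNbrs q := by
  simp only [gridNbrs, Finset.mem_insert, Finset.mem_singleton, Prod.ext_iff]
  omega

lemma chain_ignites : ∀ (L : List (ℤ × ℤ)),
    List.Chain' (fun p q => (p.1 - q.1).natAbs + (p.2 - q.2).natAbs = 1) L →
    (∀ a ∈ L.head?, ∃ t, (fireEvolve st0 t a).1 = 0 ∧ 0 < (fireEvolve st0 t a).2) →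
    (∀ p ∈ L.tail, (st0 p).1 ≤ 1 ∧ (st0 p).2 ≠ 0) →
    ∀ p ∈ L, ∃ t, (fireEvolve st0 t p).1 = 0 ∧ 0 < (fireEvolve st0 t p).2
  | [] => by simp
  | [a] => by
      intro _ hh _ p hp
      simp only [List.mem_singleton] at hp
      subst hp
      exact hh p rfl
  | a :: b :: rest => by
      intro hc hh ht
      rw [List.Chain', List.isChain_cons_cons] at hc
      have hEa : ∃ t, (fireEvolve st0 t a).1 = 0 ∧ 0 < (fireEvolve st0 t a).2 := hh a rfl
      have hgb := ht b (by simp)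
      have hEb : ∃ t, (fireEvolve st0 t b).1 = 0 ∧ 0 < (fireEvolve st0 t b).2 :=
        fire_spread st0 b a (adj_mem_gridNbrs hc.1) hgb.1 hgb.2 hEa
      intro p hp
      rcases List.mem_cons.mp hp with rfl | hp
      · exact hEa
      · exact chain_ignites (b :: rest) hc.2 (by intro x hx; simp at hx; subst hx; exact hEb)
          (fun x hx => ht x (List.mem_cons_of_mem _ hx)) p hp

lemma interior_ignites (L : List (ℤ × ℤ))
    (hc : List.Chain' (fun p q => (p.1 - q.1).natAbs + (p.2 - q.2).natAbs = 1) L)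
    (hh : ∀ a ∈ L.head?, ∃ t, (fireEvolve st0 t a).1 = 0 ∧ 0 < (fireEvolve st0 t a).2)
    (hgood : ∀ p ∈ L.tail.dropLast, (st0 p).1 ≤ 1 ∧ (st0 p).2 ≠ 0) :
    ∀ p ∈ L.tail.dropLast, ∃ t, (fireEvolve st0 t p).1 = 0 ∧ 0 < (fireEvolve st0 t p).2 := by
  intro p hp
  obtain ⟨j, hj, hpj⟩ := List.getElem_of_mem hp
  have hjlen : j < L.tail.length - 1 := by
    simpa [List.length_dropLast] using hj
  have hLlen : j + 1 < L.length := by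
    rcases L with _ | ⟨a, M⟩
    · simp at hjlen
    · simp at hjlen ⊢; omega
  have hLj : L[j+1]'hLlen = p := by
    rw [← hpj, List.getElem_dropLast, List.getElem_tail]
  -- work with the prefix of length j+2
  have htailtake : (L.take (j+2)).tail = L.tail.take (j+1) := by
    rcases L with _ | ⟨a, M⟩ <;> simp
  have hsub : ∀ x ∈ L.tail.take (j+1), x ∈ L.tail.dropLast := by
    intro x hx
    have : L.tail.take (j+1) = (L.tail.dropLast).take (j+1) := by
      rw [List.dropLast_eq_take, List.take_take]
      congr 1
      omega
    rw [this] at hx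
    exact List.take_subset _ _ hx
  have hmem : p ∈ L.take (j+2) := by
    have h1 : j + 1 < (L.take (j+2)).length := by
      simp [List.length_take]; omega
    have : (L.take (j+2))[j+1]'h1 = p := by rw [List.getElem_take]; exact hLj
    exact this ▸ List.getElem_mem h1
  refine chain_ignites st0 (L.take (j+2)) (hc.take _) ?_ ?_ p hmem
  · intro a ha
    apply hh
    rcases L with _ | ⟨b, M⟩
    · simp at ha
    · simpa using ha
  · intro x hx
    rw [htailtake] at hx
    exact hgood x (hsub x hx)

lemma tail_reverse (l : List (ℤ × ℤ)) : l.reverse.tail = l.dropLast.reverse := by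
  have h := List.dropLast_reverse (l := l.reverse)
  simp only [List.reverse_reverse] at h
  rw [h, List.reverse_reverse]

lemma rev_interior (l : List (ℤ × ℤ)) :
    l.reverse.tail.dropLast = l.tail.dropLast.reverse := by
  rw [tail_reverse, List.dropLast_reverse, List.tail_dropLast]
end A

lemma mem_tail_dropLast_of_ne {α : Type*} (l : List α) (a b c : α)
    (hh : l.head? = some a) (hl : l.getLast? = some b)
    (hc : c ∈ l) (hca : c ≠ a) (hcb : c ≠ b) : c ∈ l.tail.dropLast := by
  rcases l with _ | ⟨x, M⟩
  · simp at hc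
  · simp only [List.head?_cons, Option.some.injEq] at hh
    subst hh
    have hcM : c ∈ M := by
      rcases List.mem_cons.mp hc with rfl | h
      · exact absurd rfl hca
      · exact h
    have hM : M ≠ [] := List.ne_nil_of_mem hcM
    have hbM : M.getLast hM = b := by
      have : (x :: M).getLast (List.cons_ne_nil _ _) = b := by
        rw [List.getLast_eq_iff_getLast?_eq_some]
        exact hl
      rw [← this, List.getLast_cons hM]
    have hsplit := List.dropLast_append_getLast hM
    rw [← hsplit] at hcM
    rcases List.mem_append.mp hcM with h | h
    · simpa using h
    · simp only [List.mem_singleton] at h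
      rw [hbM] at h
      exact absurd h hcb


/-- If `S` is the set of vertex-cells corresponding to a vertex cover `C` of `G`
in the reduction instance (vertex-cells have values `(n,1)`, edge-cells `(1,1)`,
all other cells `(0,0)`), then igniting `S` at time 0 eventually ignites every
edge-cell adjacent to a vertex-cell, i.e. every cell of `T`. -/
theorem vertex_cover_ignites_all_target_cells {V : Type*} [Fintype V] [DecidableEq V]
    (G : SimpleGraph V) [DecidableRel G.Adj] (emb : GridEmbedding G)
    (nval : ℕ) (hnval : 2 ≤ nval) (x0 y0 : ℤ × ℤ → ℕ)
    (edgeCells : Set (ℤ × ℤ))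
    (hec : edgeCells =
      {p | (∃ (u v : V) (h : G.Adj u v), p ∈ emb.epath h) ∧ ∀ w : V, p ≠ emb.pos w})
    (hx0v : ∀ w : V, x0 (emb.pos w) = nval) (hy0v : ∀ w : V, y0 (emb.pos w) = 1)
    (hx0e : ∀ p ∈ edgeCells, x0 p = 1) (hy0e : ∀ p ∈ edgeCells, y0 p = 1)
    (hother : ∀ p : ℤ × ℤ, p ∉ edgeCells → (∀ w : V, p ≠ emb.pos w) →
      x0 p = 0 ∧ y0 p = 0)
    (C : Finset V) (hcover : ∀ e ∈ G.edgeSet, ∃ w ∈ C, w ∈ e)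
    (S : Finset (ℤ × ℤ)) (hS : S = C.image emb.pos)
    (T : Set (ℤ × ℤ))
    (hT : T = {p ∈ edgeCells | ∃ w : V, emb.pos w ∈ gridNbrs p}) :
    ∀ c ∈ T, EventuallyIgnites x0 y0 S c := by
  intro c hc
  set st0 : ℤ × ℤ → ℕ × ℕ := fun p => (if p ∈ S then 0 else x0 p, y0 p) with hst0
  show ∃ t, (fireEvolve st0 t c).1 = 0 ∧ 0 < (fireEvolve st0 t c).2
  rw [hT] at hc
  obtain ⟨hce, -⟩ := hc
  have hce' := hce
  rw [hec] at hce'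
  obtain ⟨⟨u, v, h, hcmem⟩, hcnp⟩ := hce'
  -- the cover contains an endpoint of the edge
  obtain ⟨w, hwC, hw⟩ := hcover s(u, v) (G.mem_edgeSet.mpr h)
  rw [Sym2.mem_iff] at hw
  -- vertex cells of the cover burn at time 0
  have hEvC : ∀ a : V, a ∈ C →
      ∃ t, (fireEvolve st0 t (emb.pos a)).1 = 0 ∧ 0 < (fireEvolve st0 t (emb.pos a)).2 := by
    intro a haC
    refine ⟨0, ?_, ?_⟩
    · show (st0 (emb.pos a)).1 = 0
      have : emb.pos a ∈ S := by
        rw [hS]; exact Finset.mem_image_of_mem _ haC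
      simp [hst0, this]
    · show 0 < (st0 (emb.pos a)).2
      simp [hst0, hy0v a]
  -- interior cells of the path are edge cells
  have hgoodL : ∀ p ∈ (emb.epath h).tail.dropLast, (st0 p).1 ≤ 1 ∧ (st0 p).2 ≠ 0 := by
    intro p hp
    have hnp := emb.interior_not_pos h p hp
    have hpe : p ∈ edgeCells := by
      rw [hec]
      exact ⟨⟨u, v, h, List.tail_subset _ (List.dropLast_subset _ hp)⟩, hnp⟩
    have hpS : p ∉ S := by
      rw [hS]
      simp only [Finset.mem_image, not_exists]
      rintro a ⟨-, ha⟩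
      exact hnp a ha.symm
    constructor
    · show (if p ∈ S then 0 else x0 p) ≤ 1
      rw [if_neg hpS, hx0e p hpe]
    · show y0 p ≠ 0
      rw [hy0e p hpe]; exact one_ne_zero
  -- c is an interior cell of the path
  have hcin : c ∈ (emb.epath h).tail.dropLast :=
    mem_tail_dropLast_of_ne _ (emb.pos u) (emb.pos v) c (emb.head_eq h) (emb.last_eq h)
      hcmem (hcnp u) (hcnp v)
  rcases hw with rfl | rfl
  · -- w = u : propagate from the head
    refine interior_ignites st0 (emb.epath h) (emb.steps h) ?_ hgoodL c hcin
    intro a ha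
    rw [emb.head_eq h, Option.mem_some_iff] at ha
    subst ha
    exact hEvC _ hwC
  · -- w = v : propagate from the tail, along the reversed path
    have hchain : List.Chain' (fun p q => (p.1 - q.1).natAbs + (p.2 - q.2).natAbs = 1)
        (emb.epath h).reverse := by
      rw [List.Chain', List.isChain_reverse]
      exact (emb.steps h).imp (fun a b hab => by omega)
    have hhd : ∀ a ∈ (emb.epath h).reverse.head?,
        ∃ t, (fireEvolve st0 t a).1 = 0 ∧ 0 < (fireEvolve st0 t a).2 := by
      intro a ha
      rw [List.head?_reverse, emb.last_eq h, Option.mem_some_iff] at ha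
      subst ha
      exact hEvC _ hwC
    have hrev := rev_interior (emb.epath h)
    refine interior_ignites st0 (emb.epath h).reverse hchain hhd ?_ c ?_
    · intro p hp
      rw [hrev, List.mem_reverse] at hp
      exact hgoodL p hp
    · rw [hrev, List.mem_reverse]
      exact hcin
end

section
/- In the fast fire propagation loop invariant: if for all cells c' already finalized (in set C) the ignition time ι(c') is correctly computed and ι(c') ≤ ι(c) for all c ∉ C, and the priority queue holds for each c ∉ C the value π(N_c ∩ C, c) (predicted ignition using only finalized neighbours), then the minimum queue entry (π, c*) satisfies π = ι(c*), and ι(c*) is minimal among all cells not in C. -/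
open scoped Classical

/-- Loop invariant of the fast fire propagation algorithm: if the ignition times
of all finalized cells (in `C`) are correct and no smaller than those outside
`C`, and the priority queue holds for each `c ∉ C` the predicted ignition time
`pr (N_c ∩ C) c`, then a minimum queue entry `(π, c*)` satisfies `π = ι(c*)`,
and `ι(c*)` is minimal among all cells not in `C`. -/
theorem fast_propagation_loop_invariant {α : Type*} [DecidableEq α]
    (Nc : α → Finset α) (ι : α → ℕ∞) (pr : Finset α → α → ℕ∞)
    (hanti : ∀ (c : α) (N N' : Finset α), N ⊆ N' → pr N' c ≤ pr N c)
    (htrue : ∀ c : α, pr (Nc c) c = ι c)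
    (hkey : ∀ c : α, pr ((Nc c).filter (fun n => ι n < ι c)) c = ι c)
    (C : Finset α)
    (hord : ∀ c' ∈ C, ∀ c, c ∉ C → ι c' ≤ ι c)
    (cstar : α) (hcs : cstar ∉ C)
    (hmin : ∀ c, c ∉ C →
      pr ((Nc cstar).filter (· ∈ C)) cstar ≤ pr ((Nc c).filter (· ∈ C)) c) :
    pr ((Nc cstar).filter (· ∈ C)) cstar = ι cstar ∧
    ∀ c, c ∉ C → ι cstar ≤ ι c := by
  have hub : ∀ c : α, ι c ≤ pr ((Nc c).filter (· ∈ C)) c := fun c => by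
    have := hanti c _ _ (Finset.filter_subset (· ∈ C) (Nc c))
    rwa [htrue] at this
  obtain ⟨v, ⟨c₀, hc₀, rfl⟩, hvmin⟩ :=
    (wellFounded_lt (α := ℕ∞)).has_min (ι '' {c | c ∉ C}) ⟨ι cstar, cstar, hcs, rfl⟩
  have hc0min : ∀ c, c ∉ C → ι c₀ ≤ ι c := fun c hc =>
    not_lt.mp (hvmin _ ⟨c, hc, rfl⟩)
  have hsub : (Nc c₀).filter (fun n => ι n < ι c₀) ⊆ (Nc c₀).filter (· ∈ C) := by
    intro n hn
    simp only [Finset.mem_filter] at hn ⊢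
    refine ⟨hn.1, ?_⟩
    by_contra h
    exact absurd hn.2 (not_lt.mpr (hc0min n h))
  have hc0 : pr ((Nc c₀).filter (· ∈ C)) c₀ = ι c₀ :=
    le_antisymm (le_trans (hanti c₀ _ _ hsub) (le_of_eq (hkey c₀))) (hub c₀)
  have h1 : pr ((Nc cstar).filter (· ∈ C)) cstar ≤ ι c₀ := hc0 ▸ hmin c₀ hc₀
  have h2 : ι cstar ≤ pr ((Nc cstar).filter (· ∈ C)) cstar := hub cstar
  exact ⟨le_antisymm (le_trans h1 (hc0min cstar hcs)) h2,
    fun c hc => le_trans h2 (le_trans h1 (hc0min c hc))⟩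
end

section
/- In the basic fire model restricted to a finite region of n cells, the fire propagation stabilizes after at most n · (x_max + y_max) time steps: there exists T ≤ n·(x_max + y_max) such that no cell is burning at any time t ≥ T, where x_max and y_max bound all initial x- and y-values. -/
open scoped Classical

/-- On a finite region of `n` cells, fire propagation stabilizes after at most
`n · (x_max + y_max)` steps: from some time `T ≤ n·(x_max + y_max)` on, no cell
is burning. -/
theorem fire_stabilizes {C : Type*} [Fintype C] (n : ℕ) (hn : Fintype.card C = n)
    (N : C → Finset C) (x y : C → ℕ → ℕ)
    (h_alive : ∀ c t, 0 < x c t → 0 < y c t →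
      x c (t + 1) = x c t - ((N c).filter (fun m => x m t = 0 ∧ 0 < y m t)).card ∧
      y c (t + 1) = y c t)
    (h_burning : ∀ c t, x c t = 0 → 0 < y c t →
      x c (t + 1) = 0 ∧ y c (t + 1) = y c t - 1)
    (h_dead : ∀ c t, y c t = 0 → x c (t + 1) = x c t ∧ y c (t + 1) = y c t)
    (xmax ymax : ℕ) (hx : ∀ c, x c 0 ≤ xmax) (hy : ∀ c, y c 0 ≤ ymax) :
    ∃ T ≤ n * (xmax + ymax), ∀ t, T ≤ t → ∀ c, ¬ (x c t = 0 ∧ 0 < y c t) := by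
  classical
  set Φ : ℕ → ℕ := fun t => ∑ c : C, (x c t + y c t) with hΦ
  have step : ∀ c t, x c (t + 1) + y c (t + 1) ≤ x c t + y c t := by
    intro c t
    rcases Nat.eq_zero_or_pos (y c t) with hy0 | hyp
    · rw [(h_dead c t hy0).1, (h_dead c t hy0).2]
    · rcases Nat.eq_zero_or_pos (x c t) with hx0 | hxp
      · obtain ⟨h1, h2⟩ := h_burning c t hx0 hyp
        rw [h1, h2, hx0]; omega
      · obtain ⟨h1, h2⟩ := h_alive c t hxp hyp
        rw [h1, h2]; omega
  have strict : ∀ c t, x c t = 0 → 0 < y c t →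
      x c (t + 1) + y c (t + 1) < x c t + y c t := by
    intro c t hx0 hyp
    obtain ⟨h1, h2⟩ := h_burning c t hx0 hyp
    rw [h1, h2, hx0]; omega
  have sdec : ∀ t, (∃ c, x c t = 0 ∧ 0 < y c t) → Φ (t + 1) < Φ t := by
    rintro t ⟨c, hc1, hc2⟩
    exact Finset.sum_lt_sum (fun i _ => step i t)
      ⟨c, Finset.mem_univ c, strict c t hc1 hc2⟩
  have frozen : ∀ t, (∀ c, ¬(x c t = 0 ∧ 0 < y c t)) →
      ∀ c, x c (t + 1) = x c t ∧ y c (t + 1) = y c t := by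
    intro t ht c
    rcases Nat.eq_zero_or_pos (y c t) with hy0 | hyp
    · exact h_dead c t hy0
    · have hxp : 0 < x c t := by
        rcases Nat.eq_zero_or_pos (x c t) with hx0 | h
        · exact absurd ⟨hx0, hyp⟩ (ht c)
        · exact h
      obtain ⟨h1, h2⟩ := h_alive c t hxp hyp
      have hemp : ((N c).filter (fun m => x m t = 0 ∧ 0 < y m t)) = ∅ := by
        apply Finset.filter_eq_empty_iff.mpr
        intro m _; exact ht m
      rw [hemp] at h1
      simp at h1
      exact ⟨h1, h2⟩
  have Φ0 : Φ 0 ≤ n * (xmax + ymax) := by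
    calc Φ 0 ≤ ∑ _c : C, (xmax + ymax) :=
          Finset.sum_le_sum (fun c _ => add_le_add (hx c) (hy c))
      _ = n * (xmax + ymax) := by
          rw [Finset.sum_const, Finset.card_univ, hn, smul_eq_mul]
  have key : ∀ t, (∀ s, s < t → ∃ c, x c s = 0 ∧ 0 < y c s) → Φ t + t ≤ Φ 0 := by
    intro t
    induction t with
    | zero => intro _; omega
    | succ t ih =>
      intro h
      have h1 := ih (fun s hs => h s (by omega))
      have h2 := sdec t (h t (by omega))
      omega
  obtain ⟨T, hT, hTn⟩ : ∃ T ≤ Φ 0, ∀ c, ¬(x c T = 0 ∧ 0 < y c T) := by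
    by_contra h
    push_neg at h
    have := key (Φ 0 + 1) (fun s hs => h s (by omega))
    omega
  have pers : ∀ k, ∀ c, ¬(x c (T + k) = 0 ∧ 0 < y c (T + k)) := by
    intro k
    induction k with
    | zero => exact hTn
    | succ k ih =>
      intro c
      have hf := frozen (T + k) ih c
      rw [show T + (k + 1) = (T + k) + 1 from rfl, hf.1, hf.2]
      exact ih c
  refine ⟨T, le_trans hT Φ0, ?_⟩
  intro t ht c
  obtain ⟨k, rfl⟩ := Nat.exists_eq_add_of_le ht
  exact pers k c
end
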